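/- arXiv:2408.16167 — 2 statements merged into one kernel-verified Lean document; each statement's English description precedes it below -/
import Mathlib

section
/- Consider the iterative algorithm that maintains a finite set 𝒮 ⊆ 𝒳, at each step computes weights w faithful to the original ensemble on 𝒮, queries an oracle that either certifies w is faithful on all of 𝒳 or returns a point x where the pruned and original ensembles disagree, and adds x to 𝒮. If the base estimators' score functions take only finitely many distinct values as functions of x up to the finite cell partition (e.g., tree ensembles with L cells), then the algorithm terminates after at most L oracle calls. -/
/-- FIPE terminates after at most `L` oracle calls: it is impossible for the
separation oracle to return counterexamples at iterations `0, 1, …, L`. -/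
theorem stmt7 {X : Type*} {M L : ℕ}
    (faithful : (Fin M → ℝ) → X → Prop) (cell : X → Fin L)
    (hcell : ∀ w x y, cell x = cell y → faithful w x → faithful w y)
    (S : ℕ → Set X) (xs : ℕ → X) (wts : ℕ → Fin M → ℝ)
    (hS : ∀ t, S (t + 1) = S t ∪ {xs t})
    (hfaith : ∀ t ≤ L, ∀ p ∈ S t, faithful (wts t) p)
    (hctr : ∀ t ≤ L, ¬ faithful (wts t) (xs t)) :
    False := by
  have hmem : ∀ t u, t < u → xs t ∈ S u := by
    intro t u htu
    induction u with
    | zero => omega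
    | succ v ih =>
      rw [hS v]
      rcases Nat.lt_succ_iff_lt_or_eq.mp htu with h | h
      · exact Or.inl (ih h)
      · exact Or.inr (by simp [h])
  have hcard : Fintype.card (Fin L) < Fintype.card (Fin (L + 1)) := by simp
  obtain ⟨i, j, hij, heq⟩ :=
    Fintype.exists_ne_map_eq_of_card_lt (fun i : Fin (L + 1) => cell (xs i)) hcard
  wlog hlt : (i : ℕ) < (j : ℕ) generalizing i j
  · exact this j i hij.symm heq.symm (lt_of_le_of_ne (not_lt.mp hlt) (fun h => hij (Fin.ext h.symm)))
  have h1 : faithful (wts j) (xs i) :=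
    hfaith j (Nat.lt_succ_iff.mp j.isLt) _ (hmem i j hlt)
  exact hctr j (Nat.lt_succ_iff.mp j.isLt) (hcell _ _ _ heq h1)
end

section
/- Suppose at iteration t of FIPE the pruner returns weights w_t faithful to the original ensemble on the current set 𝒮_t, and the oracle returns a point x_t where the pruned ensemble with weights w_t and the original ensemble disagree. If scores are constant on cells of a finite partition and faithfulness on a point of a cell implies faithfulness on the whole cell, then the cell containing x_t is disjoint from the cells containing points of 𝒮_t; hence the map t ↦ (cell of x_t) is injective across iterations. -/
theorem stmt12 {X : Type*} {M L : ℕ}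
    (faithful : (Fin M → ℝ) → X → Prop) (cell : X → Fin L)
    (hcell : ∀ w x y, cell x = cell y → faithful w x → faithful w y)
    (S : ℕ → Set X) (xs : ℕ → X) (wts : ℕ → Fin M → ℝ)
    (hS : ∀ t, S (t + 1) = S t ∪ {xs t})
    (hfaith : ∀ t, ∀ p ∈ S t, faithful (wts t) p)
    (hctr : ∀ t, ¬ faithful (wts t) (xs t)) :
    (∀ t, ∀ p ∈ S t, cell (xs t) ≠ cell p) ∧
    Function.Injective (fun t : ℕ => cell (xs t)) := by
  have key : ∀ t, ∀ p ∈ S t, cell (xs t) ≠ cell p := by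
    intro t p hp h
    exact hctr t (hcell _ p (xs t) h.symm (hfaith t p hp))
  have mono : ∀ s t, s ≤ t → S s ⊆ S t := by
    intro s t h
    induction t with
    | zero => simp_all
    | succ n ih =>
      rcases Nat.lt_or_ge s (n+1) with h' | h'
      · exact (ih (Nat.lt_succ_iff.mp h')).trans (by rw [hS n]; exact Set.subset_union_left)
      · have : s = n+1 := le_antisymm h h'
        subst this; exact subset_rfl
  have mem : ∀ s t, s < t → xs s ∈ S t := by
    intro s t h
    apply mono (s+1) t h
    rw [hS s]; exact Set.mem_union_right _ rfl
  refine ⟨key, fun a b hab => ?_⟩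
  by_contra hne
  rcases Nat.lt_or_gt_of_ne hne with h | h
  · exact key b (xs a) (mem a b h) hab.symm
  · exact key a (xs b) (mem b a h) hab
end
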